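/- Let C : R^d → R^d be a (possibly randomized) compression operator satisfying E‖x - C(x)‖² ≤ (1-ω)‖x‖² for all x, with ω ∈ (0,1]. Let A be closed convex, and let x̃^{(t)} = Π_A(x̃^{(t-1)} - η p^{(t-1)}) with x̃^{(t-1)} ∈ A. Define ĥ^{(t)} = ĥ^{(t-1)} + C(x̃^{(t)} - ĥ^{(t-1)}) and S^{(t)} := E‖x̃^{(t)} - ĥ^{(t)}‖². Then S^{(t)} ≤ (1 - ω/2) S^{(t-1)} + (2η²/ω) E‖p^{(t-1)}‖². -/

import Mathlib

open MeasureTheory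

set_option maxHeartbeats 1000000


lemma aux_proj_nonexp {d : ℕ} (A : Set (EuclideanSpace ℝ (Fin d))) (hAconv : Convex ℝ A)
    (η : ℝ) (hη : 0 < η) (x v q : EuclideanSpace ℝ (Fin d)) (hx : x ∈ A) (hv : v ∈ A)
    (hproj : ∀ z ∈ A, ‖(x - η • q) - v‖ ≤ ‖(x - η • q) - z‖) :
    ‖x - v‖ ≤ η * ‖q‖ := by
  haveI : Nonempty A := ⟨⟨v, hv⟩⟩
  set u := x - η • q with hu
  have hbdd : BddBelow (Set.range fun z : A => ‖u - (z:EuclideanSpace ℝ (Fin d))‖) :=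
    ⟨0, by rintro y ⟨z, rfl⟩; exact norm_nonneg _⟩
  have hmin : ‖u - v‖ = ⨅ z : A, ‖u - (z:EuclideanSpace ℝ (Fin d))‖ :=
    le_antisymm (le_ciInf fun z => hproj z z.2) (ciInf_le hbdd ⟨v, hv⟩)
  have hvi := (norm_eq_iInf_iff_real_inner_le_zero hAconv hv).1 hmin x hx
  set b := x - v with hbdef
  have h1 : u - v = b - η • q := by rw [hu, hbdef]; abel
  have h2 : (inner ℝ (b - η • q) b : ℝ) ≤ 0 := by
    rw [h1] at hvi
    simpa [hbdef] using hvi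
  have h3 : ‖b‖^2 ≤ η * (inner ℝ q b : ℝ) := by
    rw [inner_sub_left, real_inner_smul_left, real_inner_self_eq_norm_sq] at h2
    linarith
  have h4 : (inner ℝ q b : ℝ) ≤ ‖q‖ * ‖b‖ := real_inner_le_norm _ _
  have h5 : ‖b‖^2 ≤ η * ‖q‖ * ‖b‖ := by nlinarith
  rcases eq_or_lt_of_le (norm_nonneg b) with h0 | h0
  · rw [← h0]; positivity
  · exact (mul_le_mul_iff_of_pos_right h0).1 (by nlinarith : ‖b‖ * ‖b‖ ≤ (η * ‖q‖) * ‖b‖)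

theorem stmt_15 {d : ℕ} {Ω₁ Ω₂ : Type*} [MeasurableSpace Ω₁] [MeasurableSpace Ω₂]
    (μ₁ : Measure Ω₁) (μ₂ : Measure Ω₂)
    [IsProbabilityMeasure μ₁] [IsProbabilityMeasure μ₂]
    [SFinite μ₂]
    (ω η : ℝ) (hω : ω ∈ Set.Ioc (0:ℝ) 1) (hη : 0 < η)
    (A : Set (EuclideanSpace ℝ (Fin d))) (hAc : IsClosed A) (hAconv : Convex ℝ A)
    (C : Ω₂ → EuclideanSpace ℝ (Fin d) → EuclideanSpace ℝ (Fin d))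
    (hC : ∀ x : EuclideanSpace ℝ (Fin d), ∫ ω₂, ‖x - C ω₂ x‖^2 ∂μ₂ ≤ (1 - ω) * ‖x‖^2)
    (xprev xcur p hprev : Ω₁ → EuclideanSpace ℝ (Fin d))
    (hxprevA : ∀ ω₁, xprev ω₁ ∈ A)
    (hxcurA : ∀ ω₁, xcur ω₁ ∈ A)
    (hproj : ∀ ω₁, ∀ z ∈ A, ‖(xprev ω₁ - η • p ω₁) - xcur ω₁‖ ≤ ‖(xprev ω₁ - η • p ω₁) - z‖)
    (hcur : Ω₁ × Ω₂ → EuclideanSpace ℝ (Fin d))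
    (hhcur : ∀ ω₁ ω₂, hcur (ω₁, ω₂) = hprev ω₁ + C ω₂ (xcur ω₁ - hprev ω₁))
    (hint1 : Integrable (fun q : Ω₁ × Ω₂ => ‖xcur q.1 - hcur q‖^2) (μ₁.prod μ₂))
    (hint2 : Integrable (fun ω₁ => ‖xcur ω₁ - hprev ω₁‖^2) μ₁)
    (hint3 : Integrable (fun ω₁ => ‖xprev ω₁ - hprev ω₁‖^2) μ₁)
    (hint4 : Integrable (fun ω₁ => ‖p ω₁‖^2) μ₁) :
    ∫ q, ‖xcur q.1 - hcur q‖^2 ∂(μ₁.prod μ₂)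
      ≤ (1 - ω/2) * ∫ ω₁, ‖xprev ω₁ - hprev ω₁‖^2 ∂μ₁
        + (2*η^2/ω) * ∫ ω₁, ‖p ω₁‖^2 ∂μ₁ := by
  obtain ⟨hω0, hω1⟩ := hω
  -- Step 1: nonexpansiveness of projection gives ‖xprev - xcur‖ ≤ η ‖p‖
  have hb : ∀ ω₁, ‖xprev ω₁ - xcur ω₁‖ ≤ η * ‖p ω₁‖ := fun ω₁ =>
    aux_proj_nonexp A hAconv η hη (xprev ω₁) (xcur ω₁) (p ω₁) (hxprevA ω₁) (hxcurA ω₁)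
      (hproj ω₁)
  -- Step 2: pointwise bound (1-ω)‖xcur-hprev‖² ≤ (1-ω/2)‖xprev-hprev‖² + (2η²/ω)‖p‖²
  have hpt : ∀ ω₁, (1 - ω) * ‖xcur ω₁ - hprev ω₁‖^2
      ≤ (1 - ω/2) * ‖xprev ω₁ - hprev ω₁‖^2 + (2*η^2/ω) * ‖p ω₁‖^2 := by
    intro ω₁
    have hdecomp : ‖xcur ω₁ - hprev ω₁‖ ≤ ‖xprev ω₁ - hprev ω₁‖ + ‖xprev ω₁ - xcur ω₁‖ := by
      have : xcur ω₁ - hprev ω₁ = (xprev ω₁ - hprev ω₁) - (xprev ω₁ - xcur ω₁) := by abel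
      rw [this]
      exact norm_sub_le _ _
    set s := ‖xprev ω₁ - hprev ω₁‖ with hs
    set t := ‖xprev ω₁ - xcur ω₁‖ with ht
    set r := ‖p ω₁‖ with hr
    have hbω := hb ω₁
    have hsn : 0 ≤ s := norm_nonneg _
    have htn : 0 ≤ t := norm_nonneg _
    have hrn : 0 ≤ r := norm_nonneg _
    have hc : ‖xcur ω₁ - hprev ω₁‖^2 ≤ (s + t)^2 := by
      have h0 := norm_nonneg (xcur ω₁ - hprev ω₁)
      nlinarith [hdecomp]
    rw [div_mul_eq_mul_div, ← sub_le_iff_le_add', le_div_iff₀ hω0]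
    have ht2 : t^2 ≤ η^2 * r^2 := by nlinarith [hbω]
    have hX : ω*(1-ω)*‖xcur ω₁ - hprev ω₁‖^2 ≤ ω*(1-ω)*(s+t)^2 :=
      mul_le_mul_of_nonneg_left hc (by nlinarith)
    nlinarith [mul_nonneg (sub_nonneg.2 hω1) (sq_nonneg (ω * s - 2 * t)), ht2, hX,
      mul_nonneg (mul_nonneg (mul_nonneg hω0.le hω0.le) hω0.le) (sq_nonneg s),
      mul_nonneg hω0.le (mul_nonneg htn htn),
      mul_nonneg (mul_nonneg hω0.le hω0.le) (mul_nonneg htn htn)]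
  -- Step 3: inner integral bound
  have hinner : ∀ ω₁, ∫ ω₂, ‖xcur ω₁ - hcur (ω₁, ω₂)‖^2 ∂μ₂
      ≤ (1 - ω) * ‖xcur ω₁ - hprev ω₁‖^2 := by
    intro ω₁
    have : ∀ ω₂, ‖xcur ω₁ - hcur (ω₁, ω₂)‖^2
        = ‖(xcur ω₁ - hprev ω₁) - C ω₂ (xcur ω₁ - hprev ω₁)‖^2 := by
      intro ω₂
      rw [hhcur]
      congr 1
      congr 1
      abel
    simp_rw [this]
    exact hC (xcur ω₁ - hprev ω₁)
  -- Step 4: put it together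
  rw [integral_prod _ hint1]
  have hintL : Integrable (fun ω₁ => ∫ ω₂, ‖xcur ω₁ - hcur (ω₁, ω₂)‖^2 ∂μ₂) μ₁ :=
    hint1.integral_prod_left
  have hintR : Integrable (fun ω₁ => (1 - ω/2) * ‖xprev ω₁ - hprev ω₁‖^2
      + (2*η^2/ω) * ‖p ω₁‖^2) μ₁ := (hint3.const_mul _).add (hint4.const_mul _)
  calc ∫ ω₁, ∫ ω₂, ‖xcur ω₁ - hcur (ω₁, ω₂)‖^2 ∂μ₂ ∂μ₁
      ≤ ∫ ω₁, ((1 - ω/2) * ‖xprev ω₁ - hprev ω₁‖^2 + (2*η^2/ω) * ‖p ω₁‖^2) ∂μ₁ := by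
        apply integral_mono hintL hintR
        intro ω₁
        exact le_trans (hinner ω₁) (hpt ω₁)
    _ = (1 - ω/2) * ∫ ω₁, ‖xprev ω₁ - hprev ω₁‖^2 ∂μ₁
        + (2*η^2/ω) * ∫ ω₁, ‖p ω₁‖^2 ∂μ₁ := by
        rw [integral_add (hint3.const_mul _) (hint4.const_mul _),
          integral_const_mul, integral_const_mul]
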